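/- arXiv:2402.03034 — 2 statements merged into one kernel-verified Lean document; each statement's English description precedes it below -/
import Mathlib

section
/- Let θ > 0, x₀ ∈ ℝ, t₀ > 0, 0 < ϱ < √t₀. Suppose u ∈ C^{2,1}(B(x₀,ϱ) × (t₀-ϱ², t₀]) is nonnegative, satisfies ∂_t u - u'' ≤ -θ on the open set {u > 0} ∩ (B(x₀,ϱ) × (t₀-ϱ², t₀)), and u ≤ (θ/3)ϱ² everywhere on B(x₀,ϱ) × (t₀-ϱ², t₀]. Then u(x₀,t₀) = 0. -/
/-!
Compare `u` with the barrier `w = (θ/3)|x - x₀|² + (θ/3)(t₀ - t) + ε (t - t₀ + ϱ²)` on the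
cylinder `[x₀ - ϱ, x₀ + ϱ] × [t₀ - ϱ², t₁]`, `t₁ < t₀`. On the parabolic boundary
`w ≥ (θ/3)ϱ² ≥ u`, and `∂ₜw - w'' = ε - θ`; the `ε`-term makes `u - w` a strict subsolution of
the heat equation wherever `u > w ≥ 0`, so `u - w` has no positive maximum in the parabolic
interior. Hence `u ≤ w`, in particular `u(x₀, t₁) ≤ (θ/3)(t₀ - t₁) + εϱ²`; letting `t₁ → t₀` and
`ε → 0` gives `u(x₀, t₀) ≤ 0`.
-/

open Set Topology Function

lemma HasDerivAt.nonneg_of_eventually_le_left {f : ℝ → ℝ} {d b : ℝ} (hd : HasDerivAt f d b)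
    (hmax : ∀ᶠ t in 𝓝[<] b, f t ≤ f b) : 0 ≤ d := by
  refine ge_of_tendsto ((hasDerivAt_iff_tendsto_slope.1 hd).mono_left (nhdsLT_le_nhdsNE b)) ?_
  filter_upwards [hmax, self_mem_nhdsWithin] with t hft htb
  rw [slope_def_field]
  exact div_nonneg_of_nonpos (sub_nonpos.2 hft) (sub_nonpos.2 (le_of_lt htb))

/- If `D > 0`, the second derivative test makes `a` also a local minimum, so `h` is locally
constant and `D = 0`. -/
lemma IsLocalMax.hasDerivAt_deriv_nonpos {h H : ℝ → ℝ} {a D : ℝ} (hmax : IsLocalMax h a)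
    (hh : ∀ᶠ x in 𝓝 a, HasDerivAt h (H x) x) (hH : HasDerivAt H D a) : D ≤ 0 := by
  by_contra! hD
  have hderiv : deriv h =ᶠ[𝓝 a] H := hh.mono fun x hx => hx.deriv
  have hmin : IsLocalMin h a := by
    refine isLocalMin_of_deriv_deriv_pos ?_ ?_ hh.self_of_nhds.continuousAt
    · rwa [hderiv.deriv_eq, hH.deriv]
    · rw [hderiv.self_of_nhds]
      exact hmax.hasDerivAt_eq_zero hh.self_of_nhds
  have hconst : h =ᶠ[𝓝 a] fun _ => h a :=
    (hmax.and hmin).mono fun x hx => le_antisymm hx.1 hx.2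
  have hH0 : H =ᶠ[𝓝 a] fun _ => 0 := by
    filter_upwards [hconst.eventuallyEq_nhds, hh] with x hx hhx
    rw [← hhx.deriv, hx.deriv_eq, deriv_const]
  exact hD.ne' (hH.unique ((hasDerivAt_const a 0).congr_of_eventuallyEq hH0))

def parabolicBoundary (α β lo t₁ : ℝ) : Set (ℝ × ℝ) :=
  Icc α β ×ˢ Icc lo t₁ \ Ioo α β ×ˢ Ioc lo t₁

theorem nonpos_of_heat_lt_of_nonpos_on_parabolicBoundary {α β lo t₁ : ℝ}
    {v vt vx vxx : ℝ → ℝ → ℝ}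
    (hv : ContinuousOn (uncurry v) (Icc α β ×ˢ Icc lo t₁))
    (hderiv : ∀ x ∈ Ioo α β, ∀ t ∈ Ioc lo t₁,
      HasDerivAt (v x ·) (vt x t) t ∧ HasDerivAt (v · t) (vx x t) x ∧
        HasDerivAt (vx · t) (vxx x t) x)
    (hbdry : ∀ x t, (x, t) ∈ parabolicBoundary α β lo t₁ → v x t ≤ 0)
    (hheat : ∀ x ∈ Ioo α β, ∀ t ∈ Ioc lo t₁, 0 < v x t → vt x t < vxx x t) :
    ∀ x ∈ Icc α β, ∀ t ∈ Icc lo t₁, v x t ≤ 0 := by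
  intro x hx t ht
  obtain ⟨⟨a, b⟩, ⟨ha, hb⟩, hmax⟩ :=
    (isCompact_Icc.prod isCompact_Icc).exists_isMaxOn ⟨(x, t), hx, ht⟩ hv
  rw [isMaxOn_iff] at hmax
  suffices v a b ≤ 0 from (hmax (x, t) ⟨hx, ht⟩).trans this
  by_contra! hpos
  obtain ⟨ha', hb'⟩ : a ∈ Ioo α β ∧ b ∈ Ioc lo t₁ := by
    by_contra h
    exact hpos.not_ge (hbdry a b ⟨⟨ha, hb⟩, h⟩)
  obtain ⟨hvt, -, hvxx⟩ := hderiv a ha' b hb'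
  have htime : 0 ≤ vt a b := by
    refine hvt.nonneg_of_eventually_le_left ?_
    filter_upwards [Ioo_mem_nhdsLT hb'.1] with s hs
    exact hmax (a, s) ⟨ha, hs.1.le, hs.2.le.trans hb.2⟩
  have hspace : vxx a b ≤ 0 := by
    refine IsLocalMax.hasDerivAt_deriv_nonpos (h := (v · b)) ?_ ?_ hvxx
    · filter_upwards [Ioo_mem_nhds ha'.1 ha'.2] with y hy
      exact hmax (y, b) ⟨Ioo_subset_Icc_self hy, hb⟩
    · filter_upwards [Ioo_mem_nhds ha'.1 ha'.2] with y hy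
      exact (hderiv y hy b hb').2.1
  exact (hheat a ha' b hb' hpos).not_ge (hspace.trans htime)

noncomputable def heatBarrier (θ ε x₀ t₀ lo : ℝ) (x t : ℝ) : ℝ :=
  θ / 3 * (x - x₀) ^ 2 + θ / 3 * (t₀ - t) + ε * (t - lo)

section heatBarrier

variable {θ ε x₀ t₀ ϱ t₁ lo : ℝ}

lemma continuous_heatBarrier : Continuous (uncurry (heatBarrier θ ε x₀ t₀ lo)) := by
  unfold heatBarrier uncurry
  fun_prop

lemma hasDerivAt_heatBarrier_time (x t : ℝ) :
    HasDerivAt (heatBarrier θ ε x₀ t₀ lo x ·) (ε - θ / 3) t :=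
  ((((hasDerivAt_id' t).const_sub t₀).const_mul (θ / 3)).const_add (θ / 3 * (x - x₀) ^ 2)).add
    (((hasDerivAt_id' t).sub_const lo).const_mul ε) |>.congr_deriv (by ring)

lemma hasDerivAt_heatBarrier_space (x t : ℝ) :
    HasDerivAt (heatBarrier θ ε x₀ t₀ lo · t) (2 * θ / 3 * (x - x₀)) x :=
  (((((hasDerivAt_id' x).sub_const x₀).pow 2).const_mul (θ / 3)).add_const
    (θ / 3 * (t₀ - t))).add_const (ε * (t - lo)) |>.congr_deriv (by ring)

lemma heatBarrier_nonneg (hθ : 0 ≤ θ) (hε : 0 ≤ ε) (x : ℝ) {t : ℝ}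
    (ht : t ∈ Icc lo t₀) : 0 ≤ heatBarrier θ ε x₀ t₀ lo x t := by
  have : 0 ≤ t₀ - t := sub_nonneg.2 ht.2
  have : 0 ≤ t - lo := sub_nonneg.2 ht.1
  unfold heatBarrier
  positivity

lemma le_heatBarrier_of_mem_parabolicBoundary (hθ : 0 ≤ θ) (hε : 0 ≤ ε) (ht₁ : t₁ ≤ t₀)
    {x t : ℝ} (hq : (x, t) ∈ parabolicBoundary (x₀ - ϱ) (x₀ + ϱ) (t₀ - ϱ ^ 2) t₁) :
    θ / 3 * ϱ ^ 2 ≤ heatBarrier θ ε x₀ t₀ (t₀ - ϱ ^ 2) x t := by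
  obtain ⟨⟨hx, ht⟩, hq⟩ := hq
  have hϱ : 0 ≤ ϱ := by linarith [hx.1, hx.2]
  have : 0 ≤ t₀ - t := by linarith [ht.2]
  have : 0 ≤ t - (t₀ - ϱ ^ 2) := by linarith [ht.1]
  simp only [mem_prod, mem_Ioo, mem_Ioc, not_and_or, not_lt] at hq
  unfold heatBarrier
  rcases hq with (hx' | hx') | ht' | ht'
  · nlinarith [mul_nonneg hθ (mul_nonneg (sub_nonneg.2 hx') (by linarith : 0 ≤ x₀ + ϱ - x))]
  · nlinarith [mul_nonneg hθ (mul_nonneg (sub_nonneg.2 hx') (by linarith : 0 ≤ x - x₀ + ϱ))]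
  · nlinarith [mul_nonneg hθ (sq_nonneg (x - x₀))]
  · linarith [ht.2]

variable {u ut ux uxx : ℝ → ℝ → ℝ}

theorem le_heatBarrier (hθ : 0 < θ) (hε : 0 < ε) (ht₁ : t₁ ≤ t₀)
    (hcont : ContinuousOn (uncurry u) (Icc (x₀ - ϱ) (x₀ + ϱ) ×ˢ Icc (t₀ - ϱ ^ 2) t₁))
    (hreg : ∀ x ∈ Ioo (x₀ - ϱ) (x₀ + ϱ), ∀ t ∈ Ioc (t₀ - ϱ ^ 2) t₁,
      HasDerivAt (u x ·) (ut x t) t ∧ HasDerivAt (u · t) (ux x t) x ∧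
        HasDerivAt (ux · t) (uxx x t) x)
    (hpde : ∀ x ∈ Ioo (x₀ - ϱ) (x₀ + ϱ), ∀ t ∈ Ioc (t₀ - ϱ ^ 2) t₁,
      0 < u x t → ut x t - uxx x t ≤ -θ)
    (hbdd : ∀ x ∈ Icc (x₀ - ϱ) (x₀ + ϱ), ∀ t ∈ Icc (t₀ - ϱ ^ 2) t₁, u x t ≤ θ / 3 * ϱ ^ 2) :
    ∀ x ∈ Icc (x₀ - ϱ) (x₀ + ϱ), ∀ t ∈ Icc (t₀ - ϱ ^ 2) t₁,
      u x t ≤ heatBarrier θ ε x₀ t₀ (t₀ - ϱ ^ 2) x t := by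
  set w := heatBarrier θ ε x₀ t₀ (t₀ - ϱ ^ 2)
  have hv := nonpos_of_heat_lt_of_nonpos_on_parabolicBoundary (v := fun x t => u x t - w x t)
    (vt := fun x t => ut x t - (ε - θ / 3)) (vx := fun x t => ux x t - 2 * θ / 3 * (x - x₀))
    (vxx := fun x t => uxx x t - 2 * θ / 3) (hcont.sub continuous_heatBarrier.continuousOn)
    ?deriv ?bdry ?heat
  · intro x hx t ht
    linarith [hv x hx t ht]
  case deriv =>
    intro x hx t ht
    obtain ⟨hut, hux, huxx⟩ := hreg x hx t ht
    refine ⟨hut.sub (hasDerivAt_heatBarrier_time x t),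
      hux.sub (hasDerivAt_heatBarrier_space x t), huxx.sub ?_⟩
    exact ((hasDerivAt_id' x).sub_const x₀).const_mul (2 * θ / 3) |>.congr_deriv (mul_one _)
  case bdry =>
    intro x t hq
    linarith [hbdd x hq.1.1 t hq.1.2, le_heatBarrier_of_mem_parabolicBoundary hθ.le hε.le ht₁ hq]
  case heat =>
    intro x hx t ht hpos
    have hw : 0 ≤ w x t := heatBarrier_nonneg hθ.le hε.le x ⟨ht.1.le, ht.2.trans ht₁⟩
    linarith [hpde x hx t ht (by linarith)]

end heatBarrier

lemma le_of_le_on_Icc_prod_Ioc {f : ℝ → ℝ → ℝ} {α β lo t₁ c : ℝ} (hlo : lo < t₁)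
    (hf : ContinuousOn (uncurry f) (Icc α β ×ˢ Icc lo t₁))
    (hle : ∀ x ∈ Icc α β, ∀ t ∈ Ioc lo t₁, f x t ≤ c) :
    ∀ x ∈ Icc α β, ∀ t ∈ Icc lo t₁, f x t ≤ c := by
  intro x hx t ht
  have hmem : (x, t) ∈ closure (Icc α β ×ˢ Ioc lo t₁) := by
    rw [closure_prod_eq, closure_Icc, closure_Ioc hlo.ne]
    exact ⟨hx, ht⟩
  exact ContinuousWithinAt.closure_le (f := uncurry f) (g := fun _ => c) hmem
    ((hf _ ⟨hx, ht⟩).mono (prod_mono subset_rfl Ioc_subset_Icc_self))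
    continuousWithinAt_const fun q hq => hle q.1 hq.1 q.2 hq.2

lemma ContinuousWithinAt.le_of_forall_Ioo_le {f g : ℝ → ℝ} {a b : ℝ} (hab : a < b)
    (hf : ContinuousWithinAt f (Ioo a b) b) (hg : Continuous g) (hle : ∀ t ∈ Ioo a b, f t ≤ g t) :
    f b ≤ g b := by
  refine hf.closure_le ?_ hg.continuousWithinAt hle
  rw [closure_Ioo hab.ne]
  exact right_mem_Icc.2 hab.le

theorem stmt4_general (θ x₀ t₀ ϱ : ℝ) (hθ : 0 < θ) (hϱ : 0 < ϱ)
    (u ut ux uxx : ℝ → ℝ → ℝ)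
    (hcont : ContinuousOn (fun q : ℝ × ℝ => u q.1 q.2)
      (Icc (x₀ - ϱ) (x₀ + ϱ) ×ˢ Icc (t₀ - ϱ^2) t₀))
    (hreg : ∀ x ∈ Ioo (x₀ - ϱ) (x₀ + ϱ), ∀ t ∈ Ioc (t₀ - ϱ^2) t₀,
      HasDerivAt (fun s => u x s) (ut x t) t ∧
      HasDerivAt (fun y => u y t) (ux x t) x ∧
      HasDerivAt (fun y => ux y t) (uxx x t) x)
    (hnonneg : ∀ x ∈ Icc (x₀ - ϱ) (x₀ + ϱ), ∀ t ∈ Ioc (t₀ - ϱ^2) t₀, 0 ≤ u x t)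
    (hpde : ∀ x ∈ Ioo (x₀ - ϱ) (x₀ + ϱ), ∀ t ∈ Ioo (t₀ - ϱ^2) t₀,
      0 < u x t → ut x t - uxx x t ≤ -θ)
    (hbdd : ∀ x ∈ Icc (x₀ - ϱ) (x₀ + ϱ), ∀ t ∈ Ioc (t₀ - ϱ^2) t₀,
      u x t ≤ θ / 3 * ϱ^2) :
    u x₀ t₀ = 0 := by
  have hlo : t₀ - ϱ ^ 2 < t₀ := sub_lt_self t₀ (pow_pos hϱ 2)
  have hx₀ : x₀ ∈ Icc (x₀ - ϱ) (x₀ + ϱ) := ⟨by linarith, by linarith⟩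
  have hbdd' := le_of_le_on_Icc_prod_Ioc hlo hcont hbdd
  have hupper (ε : ℝ) (hε : 0 < ε) : u x₀ t₀ ≤ ε * ϱ ^ 2 := by
    have hbelow : ∀ t ∈ Ioo (t₀ - ϱ ^ 2) t₀, u x₀ t ≤ θ / 3 * (t₀ - t) + ε * ϱ ^ 2 := by
      intro t ht
      have := le_heatBarrier (ε := ε) hθ hε ht.2.le
        (hcont.mono (prod_mono subset_rfl (Icc_subset_Icc_right ht.2.le)))
        (fun x hx s hs => hreg x hx s ⟨hs.1, hs.2.trans ht.2.le⟩)
        (fun x hx s hs => hpde x hx s ⟨hs.1, hs.2.trans_lt ht.2⟩)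
        (fun x hx s hs => hbdd' x hx s ⟨hs.1, hs.2.trans ht.2.le⟩) x₀ hx₀ t ⟨ht.1.le, le_rfl⟩
      unfold heatBarrier at this
      nlinarith [mul_nonneg hε.le (sub_nonneg.2 ht.2.le)]
    have hcont₀ : ContinuousWithinAt (u x₀ ·) (Ioo (t₀ - ϱ ^ 2) t₀) t₀ :=
      (hcont _ ⟨hx₀, hlo.le, le_rfl⟩).comp (Continuous.prodMk_right x₀).continuousWithinAt
        fun t ht => ⟨hx₀, Ioo_subset_Icc_self ht⟩
    simpa using hcont₀.le_of_forall_Ioo_le hlo (by fun_prop) hbelow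
  have hle : u x₀ t₀ ≤ 0 := le_of_forall_pos_le_add fun δ hδ => by
    rw [zero_add, ← div_mul_cancel₀ δ (pow_pos hϱ 2).ne']
    exact hupper (δ / ϱ ^ 2) (by positivity)
  exact le_antisymm hle (hnonneg x₀ hx₀ t₀ ⟨hlo, le_rfl⟩)

/-- Non-degeneracy / maximum principle lemma for the obstacle problem:
if `∂ₜu - u'' ≤ -θ` on the positivity set and `u ≤ (θ/3)ϱ²`, then `u(x₀,t₀)=0`. -/
theorem stmt4 (θ x₀ t₀ ϱ : ℝ) (hθ : 0 < θ) (ht₀ : 0 < t₀) (hϱ : 0 < ϱ)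
    (hϱt : ϱ < Real.sqrt t₀)
    (u ut ux uxx : ℝ → ℝ → ℝ)
    (hcont : ContinuousOn (fun q : ℝ × ℝ => u q.1 q.2)
      (Icc (x₀ - ϱ) (x₀ + ϱ) ×ˢ Icc (t₀ - ϱ^2) t₀))
    (hreg : ∀ x ∈ Ioo (x₀ - ϱ) (x₀ + ϱ), ∀ t ∈ Ioc (t₀ - ϱ^2) t₀,
      HasDerivAt (fun s => u x s) (ut x t) t ∧
      HasDerivAt (fun y => u y t) (ux x t) x ∧
      HasDerivAt (fun y => ux y t) (uxx x t) x)
    (hnonneg : ∀ x ∈ Icc (x₀ - ϱ) (x₀ + ϱ), ∀ t ∈ Ioc (t₀ - ϱ^2) t₀, 0 ≤ u x t)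
    (hpde : ∀ x ∈ Ioo (x₀ - ϱ) (x₀ + ϱ), ∀ t ∈ Ioo (t₀ - ϱ^2) t₀,
      0 < u x t → ut x t - uxx x t ≤ -θ)
    (hbdd : ∀ x ∈ Icc (x₀ - ϱ) (x₀ + ϱ), ∀ t ∈ Ioc (t₀ - ϱ^2) t₀,
      u x t ≤ θ / 3 * ϱ^2) :
    u x₀ t₀ = 0 :=
  stmt4_general θ x₀ t₀ ϱ hθ hϱ u ut ux uxx hcont hreg hnonneg hpde hbdd
end

section
/- Let δ > 0, μ > 0 and M > 0, and fix s, ω > 0 with ω ≤ s. Define V(x,t) = (M/2)(t − s + ω) e^{−μ(t−s+ω)/δ²} cos(π(x − c)/δ) on [c − δ/2, c + δ/2] × (s − ω, s], where c ∈ ℝ. If μ is sufficiently large (depending only on an upper bound for |c| + δ ≤ 1 and universal constants), then ∂_t V − ((1−x²)V)'' ≤ M on this domain, V(x, s−ω) = 0, and V(c ± δ/2, t) = 0 for all t. -/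
open Set

/-- The barrier function `V(x,t) = (M/2)(t-s+ω) e^{-μ(t-s+ω)/δ²} cos(π(x-c)/δ)`. -/
noncomputable def barrier (M s ω δ c μ x t : ℝ) : ℝ :=
  (M/2) * (t - s + ω) * Real.exp (-μ * (t - s + ω) / δ^2) *
    Real.cos (Real.pi * (x - c) / δ)

/-!
Write `τ = t - s + ω` and `E = exp (-μ τ / δ²)`. The time derivative of `V` is
`(M/2)(1 - μτ/δ²) E cos`, at most `M/2` because the cosine is nonnegative on the slab.
The spatial term is `(M/2) τ E` times a trigonometric polynomial in `x` bounded by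
`(π/δ + 2)²`, and `u e^{-u} ≤ 1` gives `τ E ≤ δ²/μ`; so it is at most
`(M/2)(π + 2δ)²/μ ≤ M/2` as soon as `μ ≥ (π + 2)²`.
-/

open Real

theorem mul_exp_neg_div_le {a : ℝ} (ha : 0 < a) (u : ℝ) : u * exp (-u / a) ≤ a := by
  have h : u / a * exp (-(u / a)) ≤ 1 :=
    (mul_exp_neg_le_exp_neg_one _).trans (exp_le_one_iff.2 (by norm_num))
  calc u * exp (-u / a) = a * (u / a * exp (-(u / a))) := by rw [neg_div]; field_simp
    _ ≤ a * 1 := by gcongr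
    _ = a := mul_one a

theorem iteratedDeriv_two_one_sub_sq_mul_cos (p c x : ℝ) :
    iteratedDeriv 2 (fun y => (1 - y ^ 2) * cos (p * (y - c))) x =
      -2 * cos (p * (x - c)) + 4 * x * p * sin (p * (x - c))
        - (1 - x ^ 2) * p ^ 2 * cos (p * (x - c)) := by
  have hθ (y : ℝ) : HasDerivAt (fun y => p * (y - c)) p y := by
    simpa using ((hasDerivAt_id y).sub_const c).const_mul p
  have hq (y : ℝ) : HasDerivAt (fun y : ℝ => 1 - y ^ 2) (-(2 * y)) y := by
    simpa using (hasDerivAt_pow 2 y).const_sub 1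
  have hd : deriv (fun y => (1 - y ^ 2) * cos (p * (y - c))) =
      fun y => -(2 * y) * cos (p * (y - c)) - (1 - y ^ 2) * p * sin (p * (y - c)) := by
    funext y
    exact ((hq y).mul (hθ y).cos).deriv.trans (by ring)
  have h2 : HasDerivAt (fun y : ℝ => -(2 * y)) (-2) x := by
    simpa using ((hasDerivAt_id x).const_mul (2 : ℝ)).fun_neg
  rw [iteratedDeriv_succ, iteratedDeriv_one, hd]
  exact ((h2.mul (hθ x).cos).sub (((hq x).mul_const p).mul (hθ x).sin)).deriv.trans (by ring)

section Barrier

variable {M s ω δ c μ : ℝ}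

theorem hasDerivAt_barrier_time (x t : ℝ) :
    HasDerivAt (fun r => barrier M s ω δ c μ x r)
      (M / 2 * (1 - μ * (t - s + ω) / δ ^ 2) * exp (-μ * (t - s + ω) / δ ^ 2) *
        cos (π / δ * (x - c))) t := by
  have hτ : HasDerivAt (fun r : ℝ => r - s + ω) 1 t :=
    ((hasDerivAt_id t).sub_const s).add_const ω
  have hE := ((hτ.const_mul (-μ)).div_const (δ ^ 2)).exp
  simp only [barrier, mul_div_right_comm π]
  exact (((hτ.const_mul (M / 2)).mul hE).mul_const _).congr_deriv (by ring)

theorem iteratedDeriv_two_one_sub_sq_mul_barrier (x t : ℝ) :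
    iteratedDeriv 2 (fun y => (1 - y ^ 2) * barrier M s ω δ c μ y t) x =
      M / 2 * (t - s + ω) * exp (-μ * (t - s + ω) / δ ^ 2) *
        (-2 * cos (π / δ * (x - c)) + 4 * x * (π / δ) * sin (π / δ * (x - c))
          - (1 - x ^ 2) * (π / δ) ^ 2 * cos (π / δ * (x - c))) := by
  rw [← iteratedDeriv_two_one_sub_sq_mul_cos, ← iteratedDeriv_const_mul_field]
  congr 1
  funext y
  simp only [barrier, mul_div_right_comm π]
  ring

theorem barrier_initial (x : ℝ) : barrier M s ω δ c μ x (s - ω) = 0 := by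
  simp [barrier]

theorem barrier_left (hδ : δ ≠ 0) (t : ℝ) : barrier M s ω δ c μ (c - δ / 2) t = 0 := by
  have : π * (c - δ / 2 - c) / δ = -(π / 2) := by field_simp; ring
  rw [barrier, this, cos_neg, cos_pi_div_two, mul_zero]

theorem barrier_right (hδ : δ ≠ 0) (t : ℝ) : barrier M s ω δ c μ (c + δ / 2) t = 0 := by
  have : π * (c + δ / 2 - c) / δ = π / 2 := by field_simp; ring
  rw [barrier, this, cos_pi_div_two, mul_zero]

end Barrier

theorem cos_nonneg_of_mem_Icc_sub_add {δ c x : ℝ} (hδ : 0 < δ)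
    (hx : x ∈ Icc (c - δ / 2) (c + δ / 2)) : 0 ≤ cos (π / δ * (x - c)) := by
  have hlo : -(1 / 2) ≤ (x - c) / δ := by rw [le_div_iff₀ hδ]; linarith [hx.1]
  have hhi : (x - c) / δ ≤ 1 / 2 := by rw [div_le_iff₀ hδ]; linarith [hx.2]
  rw [div_mul_eq_mul_div, mul_div_assoc]
  apply cos_nonneg_of_mem_Icc
  constructor <;> nlinarith [pi_pos]

theorem spatial_bracket_le {p x C S : ℝ} (hp : 0 ≤ p) (hx : x ∈ Icc (-1 : ℝ) 1)
    (hC : C ∈ Icc (0 : ℝ) 1) (hS : S ∈ Icc (-1 : ℝ) 1) :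
    2 * C - 4 * x * p * S + (1 - x ^ 2) * p ^ 2 * C ≤ (p + 2) ^ 2 := by
  obtain ⟨hx0, hx1⟩ := hx
  obtain ⟨hC0, hC1⟩ := hC
  obtain ⟨hS0, hS1⟩ := hS
  have hxS : -(x * S) ≤ 1 := by
    nlinarith [mul_nonneg (neg_le_iff_add_nonneg.1 hx0) (neg_le_iff_add_nonneg.1 hS0),
      mul_nonneg (sub_nonneg.2 hx1) (sub_nonneg.2 hS1)]
  have hxC : (1 - x ^ 2) * C ≤ 1 := by nlinarith
  nlinarith [mul_le_mul_of_nonneg_left hxS hp, mul_le_mul_of_nonneg_left hxC (sq_nonneg p)]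

theorem barrier_operator_le {M δ μ τ x C S : ℝ} (hM : 0 ≤ M) (hδ : 0 < δ) (hδ1 : δ ≤ 1)
    (hμ : (π + 2) ^ 2 ≤ μ) (hτ : 0 ≤ τ) (hx : x ∈ Icc (-1 : ℝ) 1) (hC : C ∈ Icc (0 : ℝ) 1)
    (hS : S ∈ Icc (-1 : ℝ) 1) :
    M / 2 * (1 - μ * τ / δ ^ 2) * exp (-μ * τ / δ ^ 2) * C
      - M / 2 * τ * exp (-μ * τ / δ ^ 2) *
        (-2 * C + 4 * x * (π / δ) * S - (1 - x ^ 2) * (π / δ) ^ 2 * C) ≤ M := by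
  set E := exp (-μ * τ / δ ^ 2)
  have hμ0 : 0 < μ := lt_of_lt_of_le (by positivity) hμ
  have hdecay : 0 ≤ μ * τ / δ ^ 2 := by positivity
  have hE1 : E ≤ 1 := exp_le_one_iff.2 (by rw [neg_mul, neg_div]; linarith)
  have htime : (1 - μ * τ / δ ^ 2) * E * C ≤ 1 :=
    calc _ ≤ 1 * E * C := by have := hC.1; gcongr; linarith
      _ ≤ 1 := by rw [one_mul]; exact mul_le_one₀ hE1 hC.1 hC.2
  have hτE : τ * E ≤ δ ^ 2 / μ := by
    rw [le_div_iff₀ hμ0]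
    have := mul_exp_neg_div_le (by positivity : 0 < δ ^ 2) (μ * τ)
    rw [← neg_mul] at this
    linarith
  have hspace : τ * E * (2 * C - 4 * x * (π / δ) * S + (1 - x ^ 2) * (π / δ) ^ 2 * C) ≤ 1 :=
    calc _ ≤ τ * E * (π / δ + 2) ^ 2 :=
          mul_le_mul_of_nonneg_left (spatial_bracket_le (by positivity) hx hC hS)
            (mul_nonneg hτ (exp_pos _).le)
      _ ≤ δ ^ 2 / μ * (π / δ + 2) ^ 2 := by gcongr
      _ = (π + 2 * δ) ^ 2 / μ := by field_simp
      _ ≤ (π + 2) ^ 2 / μ := by gcongr; linarith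
      _ ≤ 1 := (div_le_one hμ0).2 hμ
  calc _ = M / 2 * ((1 - μ * τ / δ ^ 2) * E * C)
        + M / 2 * (τ * E * (2 * C - 4 * x * (π / δ) * S + (1 - x ^ 2) * (π / δ) ^ 2 * C)) := by
        ring
    _ ≤ M / 2 * 1 + M / 2 * 1 := by gcongr
    _ = M := by ring

theorem stmt16_general (δ M s ω c : ℝ) (hδ : 0 < δ) (hδ1 : δ ≤ 1) (hM : 0 < M)
    (hdom : Icc (c - δ/2) (c + δ/2) ⊆ Ioo (-1:ℝ) 1) :
    ∃ μ₀ : ℝ, 0 < μ₀ ∧ ∀ μ : ℝ, μ₀ ≤ μ →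
      (∀ x ∈ Icc (c - δ/2) (c + δ/2), ∀ t ∈ Ioc (s - ω) s,
        deriv (fun r => barrier M s ω δ c μ x r) t -
          iteratedDeriv 2 (fun y => (1 - y^2) * barrier M s ω δ c μ y t) x ≤ M) ∧
      (∀ x ∈ Icc (c - δ/2) (c + δ/2), barrier M s ω δ c μ x (s - ω) = 0) ∧
      (∀ t ∈ Ioc (s - ω) s,
        barrier M s ω δ c μ (c - δ/2) t = 0 ∧ barrier M s ω δ c μ (c + δ/2) t = 0) := by
  refine ⟨(π + 2) ^ 2, by positivity, fun μ hμ => ⟨?_, fun x _ => barrier_initial x,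
    fun t _ => ⟨barrier_left hδ.ne' t, barrier_right hδ.ne' t⟩⟩⟩
  intro x hx t ht
  have hτ : 0 ≤ t - s + ω := by linarith [ht.1]
  rw [(hasDerivAt_barrier_time x t).deriv, iteratedDeriv_two_one_sub_sq_mul_barrier]
  exact barrier_operator_le hM.le hδ hδ1 hμ hτ (Ioo_subset_Icc_self (hdom hx))
    ⟨cos_nonneg_of_mem_Icc_sub_add hδ hx, cos_le_one _⟩ ⟨neg_one_le_sin _, sin_le_one _⟩

/-- For `μ` sufficiently large, the barrier `V` satisfies
`∂ₜV - ((1-x²)V)'' ≤ M` on `[c-δ/2,c+δ/2] × (s-ω,s]`, vanishes at `t = s-ω`,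
and vanishes at `x = c ± δ/2`. -/
theorem stmt16 (δ M s ω c : ℝ) (hδ : 0 < δ) (hδ1 : δ ≤ 1) (hM : 0 < M)
    (hs : 0 < s) (hω : 0 < ω) (hωs : ω ≤ s)
    (hdom : Icc (c - δ/2) (c + δ/2) ⊆ Ioo (-1:ℝ) 1) :
    ∃ μ₀ : ℝ, 0 < μ₀ ∧ ∀ μ : ℝ, μ₀ ≤ μ →
      (∀ x ∈ Icc (c - δ/2) (c + δ/2), ∀ t ∈ Ioc (s - ω) s,
        deriv (fun r => barrier M s ω δ c μ x r) t -
          iteratedDeriv 2 (fun y => (1 - y^2) * barrier M s ω δ c μ y t) x ≤ M) ∧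
      (∀ x ∈ Icc (c - δ/2) (c + δ/2), barrier M s ω δ c μ x (s - ω) = 0) ∧
      (∀ t ∈ Ioc (s - ω) s,
        barrier M s ω δ c μ (c - δ/2) t = 0 ∧ barrier M s ω δ c μ (c + δ/2) t = 0) :=
  stmt16_general δ M s ω c hδ hδ1 hM hdom
end
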